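/- arXiv:2411.05643 — 5 statements merged into one kernel-verified Lean document; each statement's English description precedes it below -/
import Mathlib

section
/- The map φ(R, ρ) = (2ρ/(R²−ρ²−1), (R²+ρ²−1)/(R(R²−ρ²−1))) is injective on the set 𝔗 = {(R, ρ) : R > 1, 0 ≤ ρ < R−1}. -/
noncomputable def phi (p : ℝ × ℝ) : ℝ × ℝ :=
  (2 * p.2 / (p.1 ^ 2 - p.2 ^ 2 - 1),
   (p.1 ^ 2 + p.2 ^ 2 - 1) / (p.1 * (p.1 ^ 2 - p.2 ^ 2 - 1)))

def Tset : Set (ℝ × ℝ) := {p | 1 < p.1 ∧ 0 ≤ p.2 ∧ p.2 < p.1 - 1}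

theorem phi_injOn : Set.InjOn phi Tset := by
  rintro ⟨a, b⟩ ⟨ha1, hb0, hb1⟩ ⟨c, d⟩ ⟨hc1, hd0, hd1⟩ heq
  simp only [phi, Prod.mk.injEq] at heq
  obtain ⟨h1, h2⟩ := heq
  simp only at ha1 hb0 hb1 hc1 hd0 hd1 h1 h2
  have hD1 : (0:ℝ) < a ^ 2 - b ^ 2 - 1 := by nlinarith
  have hD2 : (0:ℝ) < c ^ 2 - d ^ 2 - 1 := by nlinarith
  have ha0 : (0:ℝ) < a := by linarith
  have hc0 : (0:ℝ) < c := by linarith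
  set x : ℝ := 2 * b / (a ^ 2 - b ^ 2 - 1) with hx
  set y : ℝ := (a ^ 2 + b ^ 2 - 1) / (a * (a ^ 2 - b ^ 2 - 1)) with hy
  -- identities for (a,b)
  have hIa : a ^ 2 * y ^ 2 = 1 + (a ^ 2 - 1) * x ^ 2 := by
    rw [hx, hy]; field_simp; ring
  have hRa : a * y = 1 + x * b := by
    rw [hx, hy]; field_simp; ring
  -- identities for (c,d), using h1, h2
  have hIc : c ^ 2 * y ^ 2 = 1 + (c ^ 2 - 1) * x ^ 2 := by
    rw [h1, h2]; field_simp; ring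
  have hRc : c * y = 1 + x * d := by
    rw [h1, h2]; field_simp; ring
  -- 0 ≤ x < 1
  have hx0 : 0 ≤ x := by
    apply div_nonneg (by linarith) (le_of_lt hD1)
  have hx1 : x < 1 := by
    rw [hx, div_lt_one hD1]; nlinarith
  have hb' : x = 0 → b = 0 := by
    intro h0
    have := (div_eq_zero_iff.mp (hx ▸ h0 : 2 * b / (a ^ 2 - b ^ 2 - 1) = 0)).resolve_right (by linarith)
    linarith
  have hd' : x = 0 → d = 0 := by
    intro h0
    have h1' : 2 * d / (c ^ 2 - d ^ 2 - 1) = 0 := by rw [← h1]; exact h0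
    have := (div_eq_zero_iff.mp h1').resolve_right (by linarith)
    linarith
  clear_value x y
  clear hx hy h1 h2
  have hx2 : x ^ 2 < 1 := by nlinarith
  have hkey : a ^ 2 * (y ^ 2 - x ^ 2) = 1 - x ^ 2 := by linear_combination hIa
  have hyxpos : 0 < y ^ 2 - x ^ 2 := by nlinarith [hkey, sq_nonneg a]
  have hac : a = c := by
    have h3 : (a ^ 2 - c ^ 2) * (y ^ 2 - x ^ 2) = 0 := by linear_combination hIa - hIc
    have h4 : a ^ 2 = c ^ 2 := by
      rcases mul_eq_zero.mp h3 with h | h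
      · linarith
      · linarith
    have h5 : (a - c) * (a + c) = 0 := by linear_combination h4
    rcases mul_eq_zero.mp h5 with h | h
    · linarith
    · linarith
  have hbd : b = d := by
    have hxy : x * b = x * d := by
      have := hRa; rw [hac] at this; linarith [hRc]
    rcases eq_or_lt_of_le hx0 with h0 | h0
    · rw [hb' h0.symm, hd' h0.symm]
    · exact mul_left_cancel₀ (ne_of_gt h0) hxy
  rw [hac, hbd]
end

section
/- For (R, ρ) with R > 1 and 0 ≤ ρ < R−1, the point φ(R, ρ) = (2ρ/(R²−ρ²−1), (R²+ρ²−1)/(R(R²−ρ²−1))) lies in the set 𝔗' = {(a, b) : 0 ≤ a < 1, a < b < 1}. -/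
def Tset' : Set (ℝ × ℝ) := {q | 0 ≤ q.1 ∧ q.1 < 1 ∧ q.1 < q.2 ∧ q.2 < 1}

theorem phi_mem_Tset' (R ρ : ℝ) (hR : 1 < R) (hρ0 : 0 ≤ ρ) (hρ : ρ < R - 1) :
    phi (R, ρ) ∈ Tset' := by
  have hD : 0 < R ^ 2 - ρ ^ 2 - 1 := by nlinarith
  have hR0 : 0 < R := by linarith
  have hRD : 0 < R * (R ^ 2 - ρ ^ 2 - 1) := by positivity
  refine ⟨?_, ?_, ?_, ?_⟩
  · exact div_nonneg (by linarith) hD.le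
  · show 2 * ρ / (R ^ 2 - ρ ^ 2 - 1) < 1
    rw [div_lt_one hD]; nlinarith
  · show 2 * ρ / (R ^ 2 - ρ ^ 2 - 1) < (R ^ 2 + ρ ^ 2 - 1) / (R * (R ^ 2 - ρ ^ 2 - 1))
    rw [div_lt_div_iff₀ hD hRD]
    nlinarith [mul_pos hD (show (0:ℝ) < (R - ρ) ^ 2 - 1 by nlinarith)]
  · show (R ^ 2 + ρ ^ 2 - 1) / (R * (R ^ 2 - ρ ^ 2 - 1)) < 1
    rw [div_lt_one hRD]
    nlinarith [mul_pos (show (0:ℝ) < R + 1 by linarith) (show (0:ℝ) < (R - 1) ^ 2 - ρ ^ 2 by nlinarith)]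
end

section
/- For R > 1 and ρ ∈ [0, R−1), set R' = R/√(R²−1) and ρ' = (√(R²−1) − ρ)/(√(R²−1)(√(R²−1) + ρ)). Then, with ρ replaced by ρ' and R by R' in the formula (R−1)((R+1)²−ρ²) : (R+1)(ρ²−(R−1)²) : 4Rρ, the resulting ratio (R'−1)((R'+1)²−ρ'²) : (R'+1)(ρ'²−(R'−1)²) : 4R'ρ' equals the ratio (R+ρ)²−1 : (R−ρ)²−1 : 2R(R²−ρ²−1). -/
theorem ratio_duality (R ρ : ℝ) (hR : 1 < R) (hρ0 : 0 ≤ ρ) (hρ : ρ < R - 1) :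
    let s := Real.sqrt (R ^ 2 - 1)
    let R' := R / s
    let ρ' := (1 / s) * ((s - ρ) / (s + ρ))
    ∃ lam : ℝ, 0 < lam ∧
      (R' - 1) * ((R' + 1) ^ 2 - ρ' ^ 2) = lam * ((R + ρ) ^ 2 - 1) ∧
      (R' + 1) * (ρ' ^ 2 - (R' - 1) ^ 2) = lam * ((R - ρ) ^ 2 - 1) ∧
      4 * R' * ρ' = lam * (2 * R * (R ^ 2 - ρ ^ 2 - 1)) := by
  intro s R' ρ'
  have h1 : (0:ℝ) < R ^ 2 - 1 := by nlinarith
  have hs0 : 0 < s := Real.sqrt_pos.mpr h1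
  have hs2 : s ^ 2 = R ^ 2 - 1 := Real.sq_sqrt h1.le
  have hsρ : 0 < s + ρ := by linarith
  refine ⟨2 / (s ^ 2 * (s + ρ) ^ 2), by positivity, ?_, ?_, ?_⟩ <;>
      show _ = _ <;> simp only [R', ρ'] <;> field_simp
  · linear_combination (2 * s - (R + s) * (s + ρ) ^ 2) * hs2
  · linear_combination (2 * s + (R - s) * (s + ρ) ^ 2) * hs2
  · linear_combination 4 * hs2
end

section
/- Let i(x, ρ) = ρ + 1/(x − ρ). For R > 1 and R−1 < ρ ≤ √(R²−1), define r₁ = (i(−(R−1), ρ) − i(R−1, ρ))/2, r₂ = (i(R+1, ρ) − i(−(R+1), ρ))/2, and d = (i(R+1, ρ) + i(−(R+1), ρ))/2 − (i(−(R−1), ρ) + i(R−1, ρ))/2. Then (r₁, r₂, d) is proportional (with positive factor) to ((R−1)((R+1)² − ρ²), (R+1)(ρ² − (R−1)²), 4Rρ). -/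
noncomputable def inv1D (x ρ : ℝ) : ℝ := ρ + 1 / (x - ρ)

/-! The inversion `x ↦ inv1D x ρ` maps the endpoints `±a` of a symmetric interval to points with
midpoint `ρ + ρ / (a² - ρ²)` and half-distance `a / (a² - ρ²)`. With `A = (R + 1)² - ρ²` and
`B = ρ² - (R - 1)²`, both positive under the hypotheses, this gives
`r₁ = (R - 1) / B`, `r₂ = (R + 1) / A` and `d = ρ / A + ρ / B = 4Rρ / (AB)`,
so the factor is `(AB)⁻¹`. -/

lemma inv1D_sub_inv1D_neg_div_two {a ρ : ℝ} (h : a ^ 2 ≠ ρ ^ 2) :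
    (inv1D a ρ - inv1D (-a) ρ) / 2 = a / (a ^ 2 - ρ ^ 2) := by
  have hsub : a - ρ ≠ 0 := fun h' => h (by rw [sub_eq_zero.mp h'])
  have hadd : -a - ρ ≠ 0 := fun h' => h (by rw [← neg_sq, sub_eq_zero.mp h'])
  have hsq : a ^ 2 - ρ ^ 2 ≠ 0 := sub_ne_zero.mpr h
  unfold inv1D
  field_simp
  ring

lemma inv1D_add_inv1D_neg_div_two {a ρ : ℝ} (h : a ^ 2 ≠ ρ ^ 2) :
    (inv1D a ρ + inv1D (-a) ρ) / 2 = ρ + ρ / (a ^ 2 - ρ ^ 2) := by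
  have hsub : a - ρ ≠ 0 := fun h' => h (by rw [sub_eq_zero.mp h'])
  have hadd : -a - ρ ≠ 0 := fun h' => h (by rw [← neg_sq, sub_eq_zero.mp h'])
  have hsq : a ^ 2 - ρ ^ 2 ≠ 0 := sub_ne_zero.mpr h
  unfold inv1D
  field_simp
  ring

theorem P1_ratio_inside (R ρ : ℝ) (hR : 1 < R) (hρ1 : R - 1 < ρ)
    (hρ2 : ρ ≤ Real.sqrt (R ^ 2 - 1)) :
    let r₁ := (inv1D (-(R - 1)) ρ - inv1D (R - 1) ρ) / 2
    let r₂ := (inv1D (R + 1) ρ - inv1D (-(R + 1)) ρ) / 2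
    let d := (inv1D (R + 1) ρ + inv1D (-(R + 1)) ρ) / 2
             - (inv1D (-(R - 1)) ρ + inv1D (R - 1) ρ) / 2
    ∃ lam : ℝ, 0 < lam ∧
      r₁ = lam * ((R - 1) * ((R + 1) ^ 2 - ρ ^ 2)) ∧
      r₂ = lam * ((R + 1) * (ρ ^ 2 - (R - 1) ^ 2)) ∧
      d = lam * (4 * R * ρ) := by
  intro r₁ r₂ d
  have hρ_lt : ρ < R + 1 :=
    hρ2.trans_lt <| (Real.sqrt_lt' (by linarith)).mpr (by nlinarith)
  have hA : 0 < (R + 1) ^ 2 - ρ ^ 2 := by nlinarith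
  have hB : 0 < ρ ^ 2 - (R - 1) ^ 2 := by nlinarith
  have hA_ne : (R + 1) ^ 2 ≠ ρ ^ 2 := (sub_pos.mp hA).ne'
  have hB_ne : (R - 1) ^ 2 ≠ ρ ^ 2 := (sub_pos.mp hB).ne
  have hr₁ : r₁ = (R - 1) / (ρ ^ 2 - (R - 1) ^ 2) := by
    rw [← neg_sub ((R - 1) ^ 2) (ρ ^ 2), div_neg, ← inv1D_sub_inv1D_neg_div_two hB_ne,
      ← neg_div, neg_sub]
  have hr₂ : r₂ = (R + 1) / ((R + 1) ^ 2 - ρ ^ 2) :=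
    inv1D_sub_inv1D_neg_div_two hA_ne
  have hd : d = ρ / ((R + 1) ^ 2 - ρ ^ 2) + ρ / (ρ ^ 2 - (R - 1) ^ 2) := by
    show _ / 2 - _ / 2 = _
    rw [inv1D_add_inv1D_neg_div_two hA_ne, add_comm (inv1D (-(R - 1)) ρ),
      inv1D_add_inv1D_neg_div_two hB_ne, ← neg_sub ((R - 1) ^ 2) (ρ ^ 2), div_neg]
    ring
  refine ⟨((R + 1) ^ 2 - ρ ^ 2)⁻¹ * (ρ ^ 2 - (R - 1) ^ 2)⁻¹, by positivity, ?_, ?_, ?_⟩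
  · rw [hr₁]
    field_simp
  · rw [hr₂]
    field_simp
  · rw [hd]
    field_simp
    ring
end

section
/- The function f(x) = (1+x)^{1/2} / ₂F₁(−1/2, −1/2; 1; x) is strictly increasing on the interval (0, 1). -/
noncomputable def twoF1 (a b c x : ℝ) : ℝ :=
  ∑' n : ℕ, ((ascPochhammer ℝ n).eval a * (ascPochhammer ℝ n).eval b) /
    ((ascPochhammer ℝ n).eval c * (n.factorial : ℝ)) * x ^ n

/-
Write `F = ₂F₁(-1/2, -1/2; 1; ·) = ∑ cₙ xⁿ`, where `cₙ₊₁ = cₙ ((n - 1/2) / (n + 1))²`.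
The derivative of `√(1 + x) / F x` is `(F - 2 (1 + x) F') / (2 √(1 + x) F²)`, and the recursion
for `cₙ` turns the numerator into `(1 - x) S(x)` with `S(x) = ∑ 2 (2n + 1) (n + 1) cₙ₊₁ xⁿ`, a series
with nonnegative coefficients and `S(0) = 1/2`. Hence the derivative is positive on `(0, 1)`.
-/

section PowerSeries

variable {𝕜 : Type*} [RCLike 𝕜]

theorem summable_mul_pow_of_norm_le {a : ℕ → 𝕜} {C : ℝ} {k : ℕ}
    (ha : ∀ n, ‖a n‖ ≤ C * ((n : ℝ) + 1) ^ k) {x : 𝕜} (hx : ‖x‖ < 1) :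
    Summable fun n => a n * x ^ n := by
  have hC : 0 ≤ C := by simpa using (norm_nonneg _).trans (ha 0)
  refine .of_norm_bounded ((summable_descFactorial_mul_geometric_of_norm_lt_one k
    (r := ‖x‖) (by simpa using hx)).mul_left C) fun n => ?_
  have hdesc : ((n : ℝ) + 1) ^ k ≤ ((n + k).descFactorial k : ℕ) := by
    have h := Nat.pow_sub_le_descFactorial (n + k) k
    rw [show n + k + 1 - k = n + 1 by omega] at h
    exact_mod_cast h
  rw [norm_mul, norm_pow, ← mul_assoc]
  gcongr
  exact (ha n).trans (by gcongr)

theorem hasDerivAt_tsum_mul_pow {a : ℕ → 𝕜} {C : ℝ} {k : ℕ}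
    (ha : ∀ n, ‖a n‖ ≤ C * ((n : ℝ) + 1) ^ k) {x : 𝕜} (hx : ‖x‖ < 1) :
    HasDerivAt (fun y => ∑' n, a n * y ^ n) (∑' n, (n + 1) * a (n + 1) * x ^ n) x := by
  obtain ⟨r, hxr, hr1⟩ := exists_between hx
  have hr0 : 0 < r := (norm_nonneg x).trans_lt hxr
  have hC : 0 ≤ C := by simpa using (norm_nonneg _).trans (ha 0)
  set u : ℕ → ℝ := fun n => C * ((n : ℝ) + 1) ^ (k + 1) * r ^ n / r
  have hu : Summable u := by
    refine (summable_mul_pow_of_norm_le (C := C) (k := k + 1) (fun n => ?_)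
      (by rwa [Real.norm_of_nonneg hr0.le])).div_const r
    rw [Real.norm_of_nonneg (by positivity)]
  have hbound : ∀ n, ∀ y ∈ Metric.ball (0 : 𝕜) r, ‖a n * (n * y ^ (n - 1))‖ ≤ u n := by
    intro n y hy
    rw [mem_ball_zero_iff] at hy
    rcases n with _ | m
    · simp only [CharP.cast_eq_zero, zero_mul, mul_zero, norm_zero, u]
      positivity
    · simp only [u, norm_mul, norm_pow, Nat.add_sub_cancel, RCLike.norm_natCast, pow_succ,
        mul_div_assoc, mul_div_cancel_right₀ _ hr0.ne']
      push_cast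
      calc ‖a (m + 1)‖ * ((m + 1) * ‖y‖ ^ m)
          ≤ C * ((m + 1 : ℝ) + 1) ^ k * ((m + 1 + 1) * r ^ m) := by
            gcongr
            · simpa using ha (m + 1)
            · linarith
      _ = C * (((m + 1 : ℝ) + 1) ^ k * ((m + 1 : ℝ) + 1)) * r ^ m := by ring
  have hmem : x ∈ Metric.ball (0 : 𝕜) r := mem_ball_zero_iff.2 hxr
  have key := hasDerivAt_tsum_of_isPreconnected hu Metric.isOpen_ball
    (convex_ball (0 : 𝕜) r).isPreconnected
    (fun n y _ => (hasDerivAt_pow n y).const_mul (a n)) hbound hmem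
    (summable_mul_pow_of_norm_le ha hx) hmem
  refine key.congr_deriv ?_
  rw [(Summable.of_norm_bounded hu fun n => hbound n x hmem).tsum_eq_zero_add]
  simp only [CharP.cast_eq_zero, zero_mul, mul_zero, zero_add, Nat.cast_add, Nat.cast_one,
    Nat.add_sub_cancel]
  exact tsum_congr fun n => by ring

end PowerSeries

namespace NegHalfHypergeometric

noncomputable def coeff (n : ℕ) : ℝ :=
  ((ascPochhammer ℝ n).eval (-1 / 2) / n.factorial) ^ 2

noncomputable def F (x : ℝ) : ℝ := ∑' n : ℕ, coeff n * x ^ n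

noncomputable def dF (x : ℝ) : ℝ := ∑' n : ℕ, ((n : ℝ) + 1) * coeff (n + 1) * x ^ n

noncomputable def S (x : ℝ) : ℝ :=
  ∑' n : ℕ, 2 * (2 * (n : ℝ) + 1) * ((n : ℝ) + 1) * coeff (n + 1) * x ^ n

theorem twoF1_eq_F (x : ℝ) : twoF1 (-1 / 2) (-1 / 2) 1 x = F x := by
  refine tsum_congr fun n => ?_
  have : (n.factorial : ℝ) ≠ 0 := by positivity
  rw [coeff, ascPochhammer_eval_one]
  field_simp

theorem coeff_zero : coeff 0 = 1 := by simp [coeff]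

theorem coeff_one : coeff 1 = 1 / 4 := by norm_num [coeff]

theorem coeff_nonneg (n : ℕ) : 0 ≤ coeff n := sq_nonneg _

theorem coeff_succ (n : ℕ) : coeff (n + 1) = coeff n * (((n : ℝ) - 1 / 2) / (n + 1)) ^ 2 := by
  have : (n.factorial : ℝ) ≠ 0 := by positivity
  rw [coeff, coeff, ascPochhammer_succ_eval, Nat.factorial_succ]
  push_cast
  field_simp
  ring

theorem coeff_le_one (n : ℕ) : coeff n ≤ 1 := by
  induction n with
  | zero => rw [coeff_zero]
  | succ n ih =>
    have hratio : (((n : ℝ) - 1 / 2) / (n + 1)) ^ 2 ≤ 1 := by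
      rw [div_pow, div_le_one (by positivity)]
      nlinarith [n.cast_nonneg (α := ℝ)]
    rw [coeff_succ]
    nlinarith [coeff_nonneg n]

theorem norm_coeff_le (n : ℕ) : ‖coeff n‖ ≤ 1 * ((n : ℝ) + 1) ^ 0 := by
  simpa [abs_of_nonneg (coeff_nonneg n)] using coeff_le_one n

theorem hasSum_F {x : ℝ} (hx : |x| < 1) : HasSum (fun n => coeff n * x ^ n) (F x) :=
  (summable_mul_pow_of_norm_le norm_coeff_le hx).hasSum

theorem hasSum_dF {x : ℝ} (hx : |x| < 1) :
    HasSum (fun n : ℕ => ((n : ℝ) + 1) * coeff (n + 1) * x ^ n) (dF x) := by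
  refine (summable_mul_pow_of_norm_le (C := 1) (k := 1) (fun n => ?_) hx).hasSum
  rw [Real.norm_of_nonneg (by positivity [coeff_nonneg (n + 1)])]
  nlinarith [coeff_le_one (n + 1)]

theorem hasSum_S {x : ℝ} (hx : |x| < 1) :
    HasSum (fun n : ℕ => 2 * (2 * (n : ℝ) + 1) * ((n : ℝ) + 1) * coeff (n + 1) * x ^ n) (S x) := by
  refine (summable_mul_pow_of_norm_le (C := 4) (k := 2) (fun n => ?_) hx).hasSum
  rw [Real.norm_of_nonneg (by positivity [coeff_nonneg (n + 1)])]
  have := coeff_le_one (n + 1)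
  have := coeff_nonneg (n + 1)
  have hn : (0 : ℝ) ≤ n := n.cast_nonneg
  nlinarith

theorem hasDerivAt_F {x : ℝ} (hx : |x| < 1) : HasDerivAt F (dF x) x :=
  hasDerivAt_tsum_mul_pow norm_coeff_le hx

theorem F_sub_two_mul_one_add_mul_dF {x : ℝ} (hx : |x| < 1) :
    F x - 2 * (1 + x) * dF x = (1 - x) * S x := by
  have hF := (hasSum_nat_add_iff' 1).2 (hasSum_F hx)
  have hdF := (hasSum_nat_add_iff' 1).2 (hasSum_dF hx)
  have hS := (hasSum_nat_add_iff' 1).2 (hasSum_S hx)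
  have hxdF : HasSum (fun n : ℕ => ((n : ℝ) + 1) * coeff (n + 1) * x ^ (n + 1)) (x * dF x) := by
    simpa only [pow_succ, ← mul_assoc, mul_comm x] using (hasSum_dF hx).mul_left x
  have hxS : HasSum (fun n : ℕ => 2 * (2 * (n : ℝ) + 1) * ((n : ℝ) + 1) * coeff (n + 1) * x ^ (n + 1))
      (x * S x) := by
    simpa only [pow_succ, ← mul_assoc, mul_comm x] using (hasSum_S hx).mul_left x
  have hsum := (((hF.sub (hdF.mul_left 2)).sub (hxdF.mul_left 2)).sub hS).add hxS
  -- the coefficient of `x ^ (n + 1)` vanishes by the recursion for `coeff (n + 2)`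
  have hcoeff : (fun n : ℕ => coeff (n + 1) * x ^ (n + 1)
      - 2 * ((((n + 1 : ℕ) : ℝ) + 1) * coeff (n + 1 + 1) * x ^ (n + 1))
      - 2 * (((n : ℝ) + 1) * coeff (n + 1) * x ^ (n + 1))
      - 2 * (2 * ((n + 1 : ℕ) : ℝ) + 1) * (((n + 1 : ℕ) : ℝ) + 1) * coeff (n + 1 + 1) * x ^ (n + 1)
      + 2 * (2 * (n : ℝ) + 1) * ((n : ℝ) + 1) * coeff (n + 1) * x ^ (n + 1)) = 0 := by
    funext n
    rw [Pi.zero_apply, coeff_succ (n + 1)]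
    push_cast
    field_simp
    ring
  rw [hcoeff] at hsum
  have h0 := hasSum_zero.unique hsum
  norm_num [coeff_zero, coeff_one] at h0
  linarith

theorem one_le_F {x : ℝ} (hx0 : 0 ≤ x) (hx1 : x < 1) : 1 ≤ F x := by
  have h := le_hasSum (hasSum_F (abs_lt.2 ⟨by linarith, hx1⟩)) 0
    fun n _ => mul_nonneg (coeff_nonneg n) (pow_nonneg hx0 n)
  rwa [coeff_zero, one_mul, pow_zero] at h

theorem S_pos {x : ℝ} (hx0 : 0 ≤ x) (hx1 : x < 1) : 0 < S x := by
  have h := le_hasSum (hasSum_S (abs_lt.2 ⟨by linarith, hx1⟩)) 0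
    fun n _ => by positivity [coeff_nonneg (n + 1)]
  norm_num [coeff_one] at h
  linarith

theorem hasDerivAt_sqrt_div_F {x : ℝ} (hx0 : 0 ≤ x) (hx1 : x < 1) :
    HasDerivAt (fun y => √(1 + y) / F y) ((1 - x) * S x / (2 * √(1 + x) * F x ^ 2)) x := by
  have hx : |x| < 1 := abs_lt.2 ⟨by linarith, hx1⟩
  have hsqrt : 0 < √(1 + x) := Real.sqrt_pos.2 (by linarith)
  have hF : 0 < F x := by linarith [one_le_F hx0 hx1]
  refine ((((hasDerivAt_id' x).const_add 1).sqrt (by linarith)).div (hasDerivAt_F hx)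
    hF.ne').congr_deriv ?_
  rw [← F_sub_two_mul_one_add_mul_dF hx]
  field_simp
  rw [Real.sq_sqrt (by linarith)]

end NegHalfHypergeometric

open NegHalfHypergeometric in
theorem f_strictMono :
    StrictMonoOn (fun x : ℝ => (1 + x) ^ ((1:ℝ)/2) / twoF1 (-1/2) (-1/2) 1 x)
      (Set.Ioo 0 1) := by
  simp_rw [← Real.sqrt_eq_rpow, twoF1_eq_F]
  refine strictMonoOn_of_hasDerivWithinAt_pos (convex_Ioo 0 1)
    (f' := fun x => (1 - x) * S x / (2 * √(1 + x) * F x ^ 2))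
    (fun x hx => (hasDerivAt_sqrt_div_F hx.1.le hx.2).continuousAt.continuousWithinAt)
    (fun x hx => ?_) (fun x hx => ?_) <;> rw [interior_Ioo] at hx
  · exact (hasDerivAt_sqrt_div_F hx.1.le hx.2).hasDerivWithinAt
  · have hF : 0 < F x := by linarith [one_le_F hx.1.le hx.2]
    have hsqrt : 0 < √(1 + x) := Real.sqrt_pos.2 (by linarith [hx.1])
    exact div_pos (mul_pos (sub_pos.2 hx.2) (S_pos hx.1.le hx.2)) (by positivity)
end
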